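/- Let ρ be a separable bipartite density matrix on ℂ^{d_A}⊗ℂ^{d_B}, and take the generalized Gell-Mann matrices as the traceless orthogonal bases. Then with x = y = n = 1, the normalized extended correlation tensor satisfies ‖M̂_{1,1}^{(1)}‖_tr ≤ (1/2) √( (2 + d_A² − d_A)(2 + d_B² − d_B) ) (Li's criterion). -/

import Mathlib

open Matrix BigOperators Kronecker
open scoped ComplexOrder

/-- The trace norm (sum of singular values) of a complex matrix. -/
noncomputable def traceNorm {m k : Type*} [Fintype m] [Fintype k] [DecidableEq k]
    (X : Matrix m k ℂ) : ℝ :=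
  ∑ i, Real.sqrt ((Matrix.isHermitian_conjTranspose_mul_self X).eigenvalues i)

/-- A density matrix: positive semidefinite with trace one. -/
def IsDensityMatrix {d : Type*} [Fintype d] [DecidableEq d] (ρ : Matrix d d ℂ) : Prop :=
  ρ.PosSemidef ∧ ρ.trace = 1

/-- Separability of a bipartite state (finite convex mixture of product density matrices). -/
def IsSeparableState (dA dB : ℕ)
    (ρ : Matrix (Fin dA × Fin dB) (Fin dA × Fin dB) ℂ) : Prop :=
  ∃ (N : ℕ) (p : Fin N → ℝ) (ρA : Fin N → Matrix (Fin dA) (Fin dA) ℂ)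
    (ρB : Fin N → Matrix (Fin dB) (Fin dB) ℂ),
    (∀ i, 0 ≤ p i) ∧ (∑ i, p i) = 1 ∧
    (∀ i, IsDensityMatrix (ρA i)) ∧ (∀ i, IsDensityMatrix (ρB i)) ∧
    ρ = ∑ i, (p i : ℂ) • (ρA i ⊗ₖ ρB i)

/-- The normalized extended correlation tensor `M̂_{x,y}^{(n)}`. -/
noncomputable def normExtCorrTensor (dA dB n : ℕ) (x y : ℝ)
    (r : Fin (dA ^ 2 - 1) → ℂ) (s : Fin (dB ^ 2 - 1) → ℂ)
    (T : Matrix (Fin (dA ^ 2 - 1)) (Fin (dB ^ 2 - 1)) ℂ) :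
    Matrix (Fin n ⊕ Fin (dA ^ 2 - 1)) (Fin n ⊕ Fin (dB ^ 2 - 1)) ℂ :=
  Matrix.fromBlocks
    (Matrix.of fun _ _ => ((x * y : ℝ) : ℂ))
    (Matrix.of fun _ j => ((x : ℝ) : ℂ) * s j)
    (Matrix.of fun i _ => ((y : ℝ) : ℂ) * r i)
    T

/-!
A separable state `ρ = ∑ₜ pₜ ρAₜ ⊗ ρBₜ` has normalized correlation data
`r̂ = ∑ₜ pₜ r̂ₜ`, `ŝ = ∑ₜ pₜ ŝₜ`, `T̂ = ∑ₜ pₜ r̂ₜ ŝₜᵀ`, where `r̂ₜ`, `ŝₜ` are the Bloch vectors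
of the local states; hence `M̂ = ∑ₜ pₜ (1, r̂ₜ)(1, ŝₜ)ᵀ` and
`‖M̂‖_tr ≤ ∑ₜ pₜ ‖(1, r̂ₜ)‖ ‖(1, ŝₜ)‖`. Purity `tr τ² ≤ 1` of a state `τ` on `ℂᵈ` bounds its
Bloch vector by `‖r̂‖² ≤ d(d-1)/2`, so `‖(1, r̂)‖² ≤ (2 + d² - d)/2`.
-/

open scoped InnerProductSpace

section Orthogonal

variable {𝕜 E ι : Type*} [RCLike 𝕜] [NormedAddCommGroup E] [InnerProductSpace 𝕜 E] [Fintype ι]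

theorem sum_norm_inner_sq_le_of_orthogonal {u : ι → E}
    (hu : Pairwise fun i j => ⟪u i, u j⟫_𝕜 = 0) (hnorm : ∀ i, u i ≠ 0 → ‖u i‖ = 1) (x : E) :
    ∑ i, ‖⟪u i, x⟫_𝕜‖ ^ 2 ≤ ‖x‖ ^ 2 := by
  classical
  let S := {i // u i ≠ 0}
  have hS : Orthonormal 𝕜 fun i : S => u i := by
    refine ⟨fun i => hnorm i i.2, fun i j hij => hu (Subtype.coe_ne_coe.mpr hij)⟩
  calc ∑ i, ‖⟪u i, x⟫_𝕜‖ ^ 2 = ∑ i : S, ‖⟪u i, x⟫_𝕜‖ ^ 2 := by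
        rw [← Fintype.sum_subtype_add_sum_subtype (fun i => u i ≠ 0), add_eq_left]
        exact Finset.sum_eq_zero fun i _ => by simp [not_not.mp i.2]
    _ ≤ ‖x‖ ^ 2 := hS.sum_inner_products_le x

theorem sum_norm_le_of_orthogonal {κ : Type*} [Fintype κ] {y : ι → E}
    (hy : Pairwise fun i j => ⟪y i, y j⟫_𝕜 = 0) (a : κ → E) (c : κ → EuclideanSpace 𝕜 ι)
    (hyac : ∀ i, y i = ∑ t, c t i • a t) :
    ∑ i, ‖y i‖ ≤ ∑ t, ‖a t‖ * ‖c t‖ := by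
  -- `‖y i‖ = ⟪u i, y i⟫` for the normalized `u i`; these are orthonormal or zero, so after
  -- expanding `y i`, Cauchy–Schwarz in `i` and Bessel's inequality bound the `t`-th term.
  let u : ι → E := fun i => (‖y i‖⁻¹ : 𝕜) • y i
  have hu : Pairwise fun i j => ⟪u i, u j⟫_𝕜 = 0 := fun i j hij => by
    simp [u, inner_smul_left, inner_smul_right, hy hij]
  have hnorm : ∀ i, u i ≠ 0 → ‖u i‖ = 1 := fun i hi =>
    norm_smul_inv_norm fun h => hi (by simp [u, h])
  have hnorm_eq : ∀ i, (‖y i‖ : 𝕜) = ∑ t, c t i * ⟪u i, a t⟫_𝕜 := fun i => by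
    simp_rw [← inner_smul_right, ← inner_sum, ← hyac, u, inner_smul_left,
      inner_self_eq_norm_sq_to_K]
    rcases eq_or_ne (y i) 0 with h | h
    · simp [h]
    · simp; field_simp
  have bessel_sqrt : ∀ t, √(∑ i, ‖⟪u i, a t⟫_𝕜‖ ^ 2) ≤ ‖a t‖ := fun t =>
    (Real.sqrt_le_left (norm_nonneg _)).mpr (sum_norm_inner_sq_le_of_orthogonal hu hnorm (a t))
  calc ∑ i, ‖y i‖ = ∑ i, RCLike.re (∑ t, c t i * ⟪u i, a t⟫_𝕜) := by
        simp_rw [← hnorm_eq, RCLike.ofReal_re]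
    _ ≤ ∑ i, ∑ t, ‖c t i‖ * ‖⟪u i, a t⟫_𝕜‖ := Finset.sum_le_sum fun i _ =>
        (RCLike.re_le_norm _).trans <| (norm_sum_le _ _).trans_eq <| by simp_rw [norm_mul]
    _ = ∑ t, ∑ i, ‖c t i‖ * ‖⟪u i, a t⟫_𝕜‖ := Finset.sum_comm
    _ ≤ ∑ t, ‖a t‖ * ‖c t‖ := Finset.sum_le_sum fun t _ => by
        refine (Real.sum_mul_le_sqrt_mul_sqrt _ _ _).trans ?_
        rw [← EuclideanSpace.norm_eq, mul_comm]
        exact mul_le_mul_of_nonneg_right (bessel_sqrt t) (norm_nonneg _)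

end Orthogonal

section TraceNorm

variable {m k : Type*} [Fintype m] [Fintype k] [DecidableEq k]

theorem inner_mulVec_eigenvectorBasis (X : Matrix m k ℂ) (hX : (Xᴴ * X).IsHermitian) (i j : k) :
    ⟪WithLp.toLp 2 (X *ᵥ hX.eigenvectorBasis i), WithLp.toLp 2 (X *ᵥ hX.eigenvectorBasis j)⟫_ℂ =
      if i = j then (hX.eigenvalues i : ℂ) else 0 := by
  have hv := orthonormal_iff_ite.mp hX.eigenvectorBasis.orthonormal i j
  rw [EuclideanSpace.inner_eq_star_dotProduct] at hv
  rw [EuclideanSpace.inner_toLp_toLp, star_mulVec, dotProduct_comm, ← dotProduct_mulVec,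
    mulVec_mulVec, hX.mulVec_eigenvectorBasis, dotProduct_comm, smul_dotProduct, hv]
  split_ifs with h <;> simp [h]

theorem traceNorm_eq_sum_norm_mulVec_eigenvectorBasis (X : Matrix m k ℂ)
    (hX : (Xᴴ * X).IsHermitian) :
    traceNorm X = ∑ i, ‖WithLp.toLp 2 (X *ᵥ hX.eigenvectorBasis i)‖ := by
  refine Finset.sum_congr rfl fun i _ => ?_
  rw [@norm_eq_sqrt_re_inner ℂ, inner_mulVec_eigenvectorBasis, if_pos rfl]
  rfl

theorem traceNorm_sum_vecMulVec_le {κ : Type*} [Fintype κ] (a : κ → m → ℂ) (b : κ → k → ℂ) :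
    traceNorm (∑ t, vecMulVec (a t) (b t)) ≤
      ∑ t, ‖WithLp.toLp 2 (a t)‖ * ‖WithLp.toLp 2 (b t)‖ := by
  set X := ∑ t, vecMulVec (a t) (b t)
  have hX := isHermitian_conjTranspose_mul_self X
  let v := hX.eigenvectorBasis
  have parseval : ∀ t, ‖WithLp.toLp 2 fun i => b t ⬝ᵥ v i‖ = ‖WithLp.toLp 2 (b t)‖ := fun t => by
    have hcoord : ∀ i, b t ⬝ᵥ v i = ⟪WithLp.toLp 2 (star (b t)), v i⟫_ℂ := fun i => by
      rw [EuclideanSpace.inner_eq_star_dotProduct, star_star, dotProduct_comm]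
    rw [EuclideanSpace.norm_eq]
    simp [hcoord, v.sum_sq_norm_inner_left, EuclideanSpace.norm_eq]
  rw [traceNorm_eq_sum_norm_mulVec_eigenvectorBasis X hX]
  refine (sum_norm_le_of_orthogonal (fun i j hij => ?_) (fun t => WithLp.toLp 2 (a t))
    (fun t => WithLp.toLp 2 fun i => b t ⬝ᵥ v i) fun i => ?_).trans_eq ?_
  · exact (inner_mulVec_eigenvectorBasis X hX i j).trans (if_neg hij)
  · ext q
    simp [X, v, Matrix.sum_mulVec, vecMulVec_mulVec, mul_comm]
  · simp_rw [parseval]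

end TraceNorm

theorem Matrix.IsHermitian.trace_mul_self {n : Type*} [Fintype n] [DecidableEq n]
    {A : Matrix n n ℂ} (hA : A.IsHermitian) :
    (A * A).trace = ∑ i, ((hA.eigenvalues i ^ 2 : ℝ) : ℂ) := by
  conv_lhs => rw [hA.spectral_theorem, ← map_mul, Unitary.conjStarAlgAut_apply, trace_mul_cycle,
    Unitary.coe_star_mul_self, one_mul, diagonal_mul_diagonal, trace_diagonal]
  simp [sq]

theorem IsDensityMatrix.re_trace_mul_self_le_one {n : Type*} [Fintype n] [DecidableEq n]
    {τ : Matrix n n ℂ} (hτ : IsDensityMatrix τ) : (τ * τ).trace.re ≤ 1 := by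
  obtain ⟨hpsd, htr⟩ := hτ
  have hμ : ∑ i, hpsd.1.eigenvalues i = 1 := by
    rw [hpsd.1.trace_eq_sum_eigenvalues] at htr
    simpa using congrArg Complex.re htr
  rw [hpsd.1.trace_mul_self, ← Complex.ofReal_sum, Complex.ofReal_re]
  calc ∑ i, hpsd.1.eigenvalues i ^ 2 ≤ (∑ i, hpsd.1.eigenvalues i) ^ 2 :=
        Finset.sum_sq_le_sq_sum_of_nonneg fun i _ => hpsd.eigenvalues_nonneg i
    _ = 1 := by rw [hμ, one_pow]

theorem sum_norm_trace_mul_sq_le {n ι : Type*} [Fintype n] [DecidableEq n] [Fintype ι]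
    [DecidableEq ι] (l : ι → Matrix n n ℂ) (hherm : ∀ i, (l i).IsHermitian)
    (htr : ∀ i, (l i).trace = 0)
    (horth : ∀ i j, (l i * l j).trace = if i = j then (2 : ℂ) else 0)
    {τ : Matrix n n ℂ} (hτ : IsDensityMatrix τ) :
    ∑ i, ‖(τ * l i).trace‖ ^ 2 ≤ 2 * (1 - (Fintype.card n : ℝ)⁻¹) := by
  -- Bessel's inequality for `τ - I / d` and the orthonormal family `λᵢ / √2` with respect to
  -- the Hilbert–Schmidt inner product `⟪x, y⟫ = tr (y xᴴ)`.
  let _ := toMatrixSeminormedAddCommGroup (1 : Matrix n n ℂ) PosSemidef.one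
  let _ := toMatrixInnerProductSpace (1 : Matrix n n ℂ) PosSemidef.one
  have hinner : ∀ x y : Matrix n n ℂ, ⟪x, y⟫_ℂ = (y * xᴴ).trace := fun x y => by
    change (y * 1 * xᴴ).trace = _
    rw [Matrix.mul_one]
  set c : ℂ := (((√2)⁻¹ : ℝ) : ℂ)
  have hc : star c * c = 2⁻¹ := by
    have : ((√2)⁻¹ * (√2)⁻¹ : ℝ) = 2⁻¹ := by rw [← mul_inv, Real.mul_self_sqrt zero_le_two]
    simp only [c, Complex.star_def, Complex.conj_ofReal, ← Complex.ofReal_mul, this]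
    push_cast; rfl
  have hon : Orthonormal ℂ fun i => c • l i := by
    rw [orthonormal_iff_ite]
    intro i j
    rw [hinner, conjTranspose_smul, (hherm i).eq, smul_mul_smul_comm, trace_smul, horth,
      smul_eq_mul, mul_comm c, hc]
    by_cases h : i = j <;> simp [h, Ne.symm]
  set x := τ - (Fintype.card n : ℂ)⁻¹ • (1 : Matrix n n ℂ)
  have hcoef : ∀ i, ‖⟪c • l i, x⟫_ℂ‖ ^ 2 = 2⁻¹ * ‖(τ * l i).trace‖ ^ 2 := fun i => by
    rw [hinner, conjTranspose_smul, (hherm i).eq, Matrix.mul_smul, trace_smul, smul_eq_mul,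
      norm_mul, mul_pow, norm_star]
    simp [x, sub_mul, htr, c, inv_pow]
  have hnorm : ‖x‖ ^ 2 = (τ * τ).trace.re - (Fintype.card n : ℝ)⁻¹ := by
    have hx : xᴴ = x := by simp [x, hτ.1.1.eq]
    rw [@norm_sq_eq_re_inner ℂ, hinner, hx]
    simp [x, sub_mul, mul_sub, hτ.2]
    by_cases h : Fintype.card n = 0 <;> simp [h]
  have hbessel := hon.sum_inner_products_le (s := Finset.univ) x
  simp only [hcoef, ← Finset.mul_sum, hnorm] at hbessel
  linarith [hτ.re_trace_mul_self_le_one]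

/-- The coordinates `r̂` in `τ = (I + ∑ r̂ᵢ λᵢ) / d`, when `tr (λᵢ λⱼ) = 2 δᵢⱼ`. -/
noncomputable def blochVector {ι : Type*} (d : ℕ) (l : ι → Matrix (Fin d) (Fin d) ℂ)
    (τ : Matrix (Fin d) (Fin d) ℂ) : ι → ℂ :=
  fun i => d / 2 * (τ * l i).trace

noncomputable def extBlochVector {ι : Type*} (d : ℕ) (l : ι → Matrix (Fin d) (Fin d) ℂ)
    (τ : Matrix (Fin d) (Fin d) ℂ) : Fin 1 ⊕ ι → ℂ :=
  Sum.elim 1 (blochVector d l τ)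

theorem norm_sq_extBlochVector_le {d : ℕ} {ι : Type*} [Fintype ι] [DecidableEq ι]
    (l : ι → Matrix (Fin d) (Fin d) ℂ) (hherm : ∀ i, (l i).IsHermitian)
    (htr : ∀ i, (l i).trace = 0)
    (horth : ∀ i j, (l i * l j).trace = if i = j then (2 : ℂ) else 0)
    {τ : Matrix (Fin d) (Fin d) ℂ} (hτ : IsDensityMatrix τ) :
    ‖WithLp.toLp 2 (extBlochVector d l τ)‖ ^ 2 ≤ (2 + (d : ℝ) ^ 2 - d) / 2 := by
  have hbloch := sum_norm_trace_mul_sq_le l hherm htr horth hτ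
  rw [Fintype.card_fin] at hbloch
  rw [EuclideanSpace.norm_sq_eq, Fintype.sum_sum_type]
  simp only [extBlochVector, Sum.elim_inl, Sum.elim_inr, Pi.one_apply, blochVector, norm_mul,
    mul_pow, ← Finset.mul_sum]
  calc _ ≤ 1 + ((d : ℝ) / 2) ^ 2 * (2 * (1 - (d : ℝ)⁻¹)) := by simp; gcongr
    _ = (2 + (d : ℝ) ^ 2 - d) / 2 := by
      rcases eq_or_ne (d : ℝ) 0 with h | h
      · simp [h]
      · field_simp; ring

noncomputable def blochExpansion {ι κ : Type*} [Fintype ι] [Fintype κ] (dA dB : ℕ)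
    (lA : ι → Matrix (Fin dA) (Fin dA) ℂ) (lB : κ → Matrix (Fin dB) (Fin dB) ℂ)
    (r : ι → ℂ) (s : κ → ℂ) (T : Matrix ι κ ℂ) :
    Matrix (Fin dA × Fin dB) (Fin dA × Fin dB) ℂ :=
  ((dA * dB : ℂ))⁻¹ •
    (1 + ∑ i, r i • (lA i ⊗ₖ 1) + ∑ j, s j • (1 ⊗ₖ lB j) + ∑ i, ∑ j, T i j • (lA i ⊗ₖ lB j))

section BlochExpansion

variable {ι κ : Type*} [Fintype ι] [Fintype κ] {dA dB : ℕ}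
  {lA : ι → Matrix (Fin dA) (Fin dA) ℂ} {lB : κ → Matrix (Fin dB) (Fin dB) ℂ}
  (r : ι → ℂ) (s : κ → ℂ) (T : Matrix ι κ ℂ)

theorem trace_blochExpansion_mul_kronecker (C : Matrix (Fin dA) (Fin dA) ℂ)
    (D : Matrix (Fin dB) (Fin dB) ℂ) :
    (blochExpansion dA dB lA lB r s T * (C ⊗ₖ D)).trace = ((dA * dB : ℂ))⁻¹ *
      (C.trace * D.trace + ∑ i, r i * ((lA i * C).trace * D.trace)
        + ∑ j, s j * (C.trace * (lB j * D).trace)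
        + ∑ i, ∑ j, T i j * ((lA i * C).trace * (lB j * D).trace)) := by
  simp only [blochExpansion, smul_mul, trace_smul, add_mul, one_mul, Finset.sum_mul,
    trace_add, trace_sum, ← mul_kronecker_mul, trace_kronecker, smul_eq_mul]

theorem blochExpansion_coeff_left [DecidableEq ι] (hA : dA ≠ 0) (hB : dB ≠ 0)
    (hlAtr : ∀ i, (lA i).trace = 0)
    (hlAorth : ∀ i i', (lA i * lA i').trace = if i = i' then (2 : ℂ) else 0)
    (hlBtr : ∀ j, (lB j).trace = 0) (i : ι) :
    r i = dA / 2 * (blochExpansion dA dB lA lB r s T * (lA i ⊗ₖ 1)).trace := by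
  rw [trace_blochExpansion_mul_kronecker]
  simp [hlAtr, hlBtr, hlAorth]
  field_simp

theorem blochExpansion_coeff_right [DecidableEq κ] (hA : dA ≠ 0) (hB : dB ≠ 0)
    (hlAtr : ∀ i, (lA i).trace = 0)
    (hlBtr : ∀ j, (lB j).trace = 0)
    (hlBorth : ∀ j j', (lB j * lB j').trace = if j = j' then (2 : ℂ) else 0) (j : κ) :
    s j = dB / 2 * (blochExpansion dA dB lA lB r s T * (1 ⊗ₖ lB j)).trace := by
  rw [trace_blochExpansion_mul_kronecker]
  simp [hlAtr, hlBtr, hlBorth]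
  field_simp

theorem blochExpansion_coeff_corr [DecidableEq ι] [DecidableEq κ] (hA : dA ≠ 0) (hB : dB ≠ 0)
    (hlAtr : ∀ i, (lA i).trace = 0)
    (hlAorth : ∀ i i', (lA i * lA i').trace = if i = i' then (2 : ℂ) else 0)
    (hlBtr : ∀ j, (lB j).trace = 0)
    (hlBorth : ∀ j j', (lB j * lB j').trace = if j = j' then (2 : ℂ) else 0) (i : ι) (j : κ) :
    T i j = dA * dB / 4 * (blochExpansion dA dB lA lB r s T * (lA i ⊗ₖ lB j)).trace := by
  rw [trace_blochExpansion_mul_kronecker]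
  simp [hlAtr, hlBtr, hlAorth, hlBorth]
  field_simp
  ring

end BlochExpansion

theorem trace_sum_smul_kronecker_mul_kronecker {m n κ : Type*} [Fintype m] [Fintype n]
    [Fintype κ] (p : κ → ℂ) (ρA : κ → Matrix m m ℂ) (ρB : κ → Matrix n n ℂ)
    (C : Matrix m m ℂ) (D : Matrix n n ℂ) :
    ((∑ t, p t • (ρA t ⊗ₖ ρB t)) * (C ⊗ₖ D)).trace =
      ∑ t, p t * ((ρA t * C).trace * (ρB t * D).trace) := by
  simp only [Finset.sum_mul, smul_mul, trace_sum, trace_smul, ← mul_kronecker_mul,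
    trace_kronecker, smul_eq_mul]

theorem normExtCorrTensor_eq_sum_vecMulVec {dA dB : ℕ} {κ : Type*} [Fintype κ]
    {lA : Fin (dA ^ 2 - 1) → Matrix (Fin dA) (Fin dA) ℂ}
    {lB : Fin (dB ^ 2 - 1) → Matrix (Fin dB) (Fin dB) ℂ}
    (hA : dA ≠ 0) (hB : dB ≠ 0) (hlAtr : ∀ i, (lA i).trace = 0)
    (hlAorth : ∀ i i', (lA i * lA i').trace = if i = i' then (2 : ℂ) else 0)
    (hlBtr : ∀ j, (lB j).trace = 0)
    (hlBorth : ∀ j j', (lB j * lB j').trace = if j = j' then (2 : ℂ) else 0)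
    {r : Fin (dA ^ 2 - 1) → ℂ} {s : Fin (dB ^ 2 - 1) → ℂ}
    {T : Matrix (Fin (dA ^ 2 - 1)) (Fin (dB ^ 2 - 1)) ℂ}
    {p : κ → ℝ} (hp : ∑ t, p t = 1) {ρA : κ → Matrix (Fin dA) (Fin dA) ℂ}
    {ρB : κ → Matrix (Fin dB) (Fin dB) ℂ} (hρA : ∀ t, (ρA t).trace = 1)
    (hρB : ∀ t, (ρB t).trace = 1)
    (hsep : blochExpansion dA dB lA lB r s T = ∑ t, (p t : ℂ) • (ρA t ⊗ₖ ρB t)) :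
    normExtCorrTensor dA dB 1 1 1 r s T = ∑ t, (p t : ℂ) •
      vecMulVec (extBlochVector dA lA (ρA t)) (extBlochVector dB lB (ρB t)) := by
  ext (i | i) (j | j) <;>
    simp only [normExtCorrTensor, fromBlocks_apply₁₁, fromBlocks_apply₁₂, fromBlocks_apply₂₁,
      fromBlocks_apply₂₂, of_apply, Matrix.sum_apply, Matrix.smul_apply, vecMulVec_apply,
      Sum.elim_inl, Sum.elim_inr, Pi.one_apply, extBlochVector, blochVector, smul_eq_mul]
  · simp only [mul_one, Complex.ofReal_one]
    exact_mod_cast hp.symm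
  · rw [Complex.ofReal_one, one_mul, blochExpansion_coeff_right r s T hA hB hlAtr hlBtr hlBorth,
      hsep, trace_sum_smul_kronecker_mul_kronecker, Finset.mul_sum]
    refine Finset.sum_congr rfl fun t _ => ?_
    simp only [mul_one, hρA]
    ring
  · rw [Complex.ofReal_one, one_mul, blochExpansion_coeff_left r s T hA hB hlAtr hlAorth hlBtr,
      hsep, trace_sum_smul_kronecker_mul_kronecker, Finset.mul_sum]
    refine Finset.sum_congr rfl fun t _ => ?_
    simp only [mul_one, hρB]
    ring
  · rw [blochExpansion_coeff_corr r s T hA hB hlAtr hlAorth hlBtr hlBorth,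
      hsep, trace_sum_smul_kronecker_mul_kronecker, Finset.mul_sum]
    refine Finset.sum_congr rfl fun t _ => ?_
    ring

theorem li_criterion_of_separable_general
    (dA dB : ℕ) (hdA : 2 ≤ dA) (hdB : 2 ≤ dB)
    (lA : Fin (dA ^ 2 - 1) → Matrix (Fin dA) (Fin dA) ℂ)
    (lB : Fin (dB ^ 2 - 1) → Matrix (Fin dB) (Fin dB) ℂ)
    (hlAherm : ∀ i, (lA i).IsHermitian)
    (hlBherm : ∀ j, (lB j).IsHermitian)
    (hlAtr : ∀ i, (lA i).trace = 0)
    (hlBtr : ∀ j, (lB j).trace = 0)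
    (hlAorth : ∀ i j, (lA i * lA j).trace = if i = j then (2 : ℂ) else 0)
    (hlBorth : ∀ i j, (lB i * lB j).trace = if i = j then (2 : ℂ) else 0)
    (ρ : Matrix (Fin dA × Fin dB) (Fin dA × Fin dB) ℂ)
    (hsep : IsSeparableState dA dB ρ)
    (r : Fin (dA ^ 2 - 1) → ℂ) (s : Fin (dB ^ 2 - 1) → ℂ)
    (T : Matrix (Fin (dA ^ 2 - 1)) (Fin (dB ^ 2 - 1)) ℂ)
    (hexp : ρ = ((dA * dB : ℂ))⁻¹ •
      ((1 : Matrix (Fin dA × Fin dB) (Fin dA × Fin dB) ℂ)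
        + ∑ i, r i • (lA i ⊗ₖ (1 : Matrix (Fin dB) (Fin dB) ℂ))
        + ∑ j, s j • ((1 : Matrix (Fin dA) (Fin dA) ℂ) ⊗ₖ lB j)
        + ∑ i, ∑ j, T i j • (lA i ⊗ₖ lB j)))
 :
    traceNorm (normExtCorrTensor dA dB 1 1 1 r s T) ≤
      (1 / 2) * Real.sqrt ((2 + (dA : ℝ) ^ 2 - dA) * (2 + (dB : ℝ) ^ 2 - dB)) := by
  obtain ⟨N, p, ρA, ρB, hp0, hp1, hρA, hρB, rfl⟩ := hsep
  set cA : ℝ := (2 + (dA : ℝ) ^ 2 - dA) / 2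
  set cB : ℝ := (2 + (dB : ℝ) ^ 2 - dB) / 2
  have hnormA : ∀ t, ‖WithLp.toLp 2 (extBlochVector dA lA (ρA t))‖ ≤ √cA := fun t =>
    Real.le_sqrt_of_sq_le (norm_sq_extBlochVector_le lA hlAherm hlAtr hlAorth (hρA t))
  have hnormB : ∀ t, ‖WithLp.toLp 2 (extBlochVector dB lB (ρB t))‖ ≤ √cB := fun t =>
    Real.le_sqrt_of_sq_le (norm_sq_extBlochVector_le lB hlBherm hlBtr hlBorth (hρB t))
  rw [normExtCorrTensor_eq_sum_vecMulVec (by omega) (by omega) hlAtr hlAorth hlBtr hlBorth hp1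
    (fun t => (hρA t).2) (fun t => (hρB t).2) hexp.symm]
  simp_rw [← smul_vecMulVec]
  calc _ ≤ _ := traceNorm_sum_vecMulVec_le _ _
    _ ≤ ∑ t, p t * (√cA * √cB) := Finset.sum_le_sum fun t _ => by
        rw [WithLp.toLp_smul, norm_smul, Complex.norm_real, Real.norm_of_nonneg (hp0 t),
          mul_assoc]
        exact mul_le_mul_of_nonneg_left
          (mul_le_mul (hnormA t) (hnormB t) (norm_nonneg _) (Real.sqrt_nonneg _)) (hp0 t)
    _ = (1 / 2) * √((2 + (dA : ℝ) ^ 2 - dA) * (2 + (dB : ℝ) ^ 2 - dB)) := by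
        have hcA : 0 ≤ cA := by simp only [cA]; nlinarith [sq_nonneg (2 * (dA : ℝ) - 1)]
        rw [← Finset.sum_mul, hp1, one_mul, ← Real.sqrt_mul hcA,
          show cA * cB = (2 + (dA : ℝ) ^ 2 - dA) * (2 + (dB : ℝ) ^ 2 - dB) / 2 ^ 2 by ring,
          Real.sqrt_div' _ (by positivity), Real.sqrt_sq zero_le_two]
        ring

/-- **Li's criterion** (Gell-Mann bases, `x = y = n = 1`): for a separable state,
`‖M̂_{1,1}^{(1)}‖_tr ≤ (1/2)√((2 + d_A² − d_A)(2 + d_B² − d_B))`. -/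
theorem li_criterion_of_separable
    (dA dB : ℕ) (hdA : 2 ≤ dA) (hdB : 2 ≤ dB)
    (lA : Fin (dA ^ 2 - 1) → Matrix (Fin dA) (Fin dA) ℂ)
    (lB : Fin (dB ^ 2 - 1) → Matrix (Fin dB) (Fin dB) ℂ)
    (hlAherm : ∀ i, (lA i).IsHermitian)
    (hlBherm : ∀ j, (lB j).IsHermitian)
    (hlAtr : ∀ i, (lA i).trace = 0)
    (hlBtr : ∀ j, (lB j).trace = 0)
    (hlAorth : ∀ i j, (lA i * lA j).trace = if i = j then (2 : ℂ) else 0)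
    (hlBorth : ∀ i j, (lB i * lB j).trace = if i = j then (2 : ℂ) else 0)
    (hlAspan : ∀ X : Matrix (Fin dA) (Fin dA) ℂ, X.trace = 0 →
      X ∈ Submodule.span ℂ (Set.range lA))
    (hlBspan : ∀ X : Matrix (Fin dB) (Fin dB) ℂ, X.trace = 0 →
      X ∈ Submodule.span ℂ (Set.range lB))
    (ρ : Matrix (Fin dA × Fin dB) (Fin dA × Fin dB) ℂ)
    (hρ : IsDensityMatrix ρ)
    (hsep : IsSeparableState dA dB ρ)
    (r : Fin (dA ^ 2 - 1) → ℂ) (s : Fin (dB ^ 2 - 1) → ℂ)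
    (T : Matrix (Fin (dA ^ 2 - 1)) (Fin (dB ^ 2 - 1)) ℂ)
    (hexp : ρ = ((dA * dB : ℂ))⁻¹ •
      ((1 : Matrix (Fin dA × Fin dB) (Fin dA × Fin dB) ℂ)
        + ∑ i, r i • (lA i ⊗ₖ (1 : Matrix (Fin dB) (Fin dB) ℂ))
        + ∑ j, s j • ((1 : Matrix (Fin dA) (Fin dA) ℂ) ⊗ₖ lB j)
        + ∑ i, ∑ j, T i j • (lA i ⊗ₖ lB j)))
 :
    traceNorm (normExtCorrTensor dA dB 1 1 1 r s T) ≤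
      (1 / 2) * Real.sqrt ((2 + (dA : ℝ) ^ 2 - dA) * (2 + (dB : ℝ) ^ 2 - dB)) :=
  li_criterion_of_separable_general dA dB hdA hdB lA lB hlAherm hlBherm hlAtr hlBtr hlAorth hlBorth
    ρ hsep r s T hexp
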